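/- arXiv:1606.08517 — 7 statements merged into one kernel-verified Lean document; each statement's English description precedes it below -/
import Mathlib

section
/- Let A be a commutative ring, I an ideal, and A → A' a ring homomorphism such that A/I^n → A'/I^nA' is an isomorphism for all n ≥ 1. Then for every A-module M annihilated by I^n for some n, the natural map M → A' ⊗_A M is an isomorphism. -/
open TensorProduct

/-- Let `A` be a commutative ring, `I` an ideal, and `A → A'` a ring homomorphism such that
`A/I^n → A'/I^n A'` is an isomorphism for all `n ≥ 1`.  Then for every `A`-module `M`
annihilated by `I^n` for some `n`, the natural map `M → A' ⊗[A] M`, `m ↦ 1 ⊗ m`,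
is an isomorphism. -/
theorem stmt0 (A : Type*) [CommRing A] (A' : Type*) [CommRing A'] [Algebra A A']
    (I : Ideal A)
    (hiso : ∀ n : ℕ, 1 ≤ n →
      Function.Bijective
        (Ideal.quotientMap (Ideal.map (algebraMap A A') (I ^ n)) (algebraMap A A')
          Ideal.le_comap_map))
    (M : Type*) [AddCommGroup M] [Module A M]
    (hann : ∃ n : ℕ, ∀ a ∈ I ^ n, ∀ m : M, a • m = 0) :
    Function.Bijective (TensorProduct.mk A A' M 1) := by
  obtain ⟨n₀, hn₀⟩ := hann
  set n := max n₀ 1 with hn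
  have hn1 : 1 ≤ n := le_max_right _ _
  have hann' : ∀ a ∈ I ^ n, ∀ m : M, a • m = 0 := by
    intro a ha m
    exact hn₀ a (Ideal.pow_le_pow_right (le_max_left _ _) ha) m
  set J : Ideal A := I ^ n with hJ
  set J' : Ideal A' := Ideal.map (algebraMap A A') J with hJ'
  have hT : Module.IsTorsionBySet A M (J : Set A) := fun m a => hann' a.1 a.2 m
  letI : Module (A ⧸ J) M := hT.module
  set e : (A ⧸ J) ≃+* (A' ⧸ J') :=
    RingEquiv.ofBijective _ (hiso n hn1) with he0
  have he : ∀ a : A, e (Ideal.Quotient.mk J a) = Ideal.Quotient.mk J' (algebraMap A A' a) := by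
    intro a
    show Ideal.quotientMap J' (algebraMap A A') Ideal.le_comap_map (Ideal.Quotient.mk J a) = _
    exact Ideal.quotientMap_mk
  -- φ : A' → A ⧸ J
  set φ : A' →+* A ⧸ J := (e.symm : (A' ⧸ J') →+* (A ⧸ J)).comp (Ideal.Quotient.mk J') with hφ
  have hφa : ∀ a : A, φ (algebraMap A A' a) = Ideal.Quotient.mk J a := by
    intro a
    simp only [hφ, RingHom.comp_apply, ← he]
    exact e.symm_apply_apply _
  -- tensors with J' in the first slot vanish
  have hzero : ∀ x ∈ J', ∀ m : M, (x ⊗ₜ[A] m : A' ⊗[A] M) = 0 := by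
    intro x hx m
    have : x ∈ Submodule.span A' ((algebraMap A A') '' (J : Set A)) := by
      rwa [hJ', Ideal.map, Ideal.span] at hx
    refine Submodule.span_induction ?_ ?_ ?_ ?_ this
    · rintro y ⟨i, hi, rfl⟩
      have : (algebraMap A A' i) ⊗ₜ[A] m = i • ((1 : A') ⊗ₜ[A] m) := by
        rw [TensorProduct.smul_tmul', Algebra.smul_def, mul_one]
      rw [this, ← TensorProduct.tmul_smul, hann' i hi m, TensorProduct.tmul_zero]
    · simp
    · intro y z _ _ hy hz
      rw [TensorProduct.add_tmul, hy, hz, add_zero]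
    · intro c y _ hy
      rw [← TensorProduct.smul_tmul', hy, smul_zero]
  -- define the inverse
  set B : A' →ₗ[A] M →ₗ[A] M :=
    { toFun := fun a' =>
        { toFun := fun m => φ a' • m
          map_add' := fun x y => smul_add _ _ _
          map_smul' := fun a x => by
            simp only [RingHom.id_apply]
            rw [← hT.mk_smul a x, ← mul_smul, mul_comm _ (Ideal.Quotient.mk J a), mul_smul,
              hT.mk_smul a _] }
      map_add' := fun x y => by
        ext m
        simp [add_smul]
      map_smul' := fun a x => by
        ext m
        simp only [LinearMap.coe_mk, AddHom.coe_mk, RingHom.id_apply, LinearMap.smul_apply]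
        rw [Algebra.smul_def, map_mul, hφa, mul_smul]
        exact hT.mk_smul _ _ } with hB
  set g : A' ⊗[A] M →ₗ[A] M := TensorProduct.lift B with hg
  have hg1 : ∀ m : M, g ((1 : A') ⊗ₜ[A] m) = m := by
    intro m
    simp only [hg, TensorProduct.lift.tmul, hB]
    show φ 1 • m = m
    rw [map_one, one_smul]
  have hg2 : ∀ x : A' ⊗[A] M, (1 : A') ⊗ₜ[A] (g x) = x := by
    intro x
    induction x with
    | zero => simp
    | add y z hy hz => rw [map_add, TensorProduct.tmul_add, hy, hz]
    | tmul a' m =>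
      simp only [hg, TensorProduct.lift.tmul, hB]
      show (1 : A') ⊗ₜ[A] (φ a' • m) = a' ⊗ₜ[A] m
      obtain ⟨a, ha⟩ := Ideal.Quotient.mk_surjective (I := J) (φ a')
      rw [← ha]
      have hsm : (Ideal.Quotient.mk J a : A ⧸ J) • m = a • m := hT.mk_smul a m
      rw [hsm, ← TensorProduct.smul_tmul, Algebra.smul_def, mul_one]
      have hmem : a' - algebraMap A A' a ∈ J' := by
        rw [← Ideal.Quotient.eq_zero_iff_mem, map_sub, sub_eq_zero]
        have : Ideal.Quotient.mk J' (algebraMap A A' a) = e (Ideal.Quotient.mk J a) :=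
          (he a).symm
        rw [this, ha]
        have : e (φ a') = Ideal.Quotient.mk J' a' := e.apply_symm_apply _
        rw [← this]
      have := hzero _ hmem m
      rw [TensorProduct.sub_tmul, sub_eq_zero] at this
      exact this.symm
  constructor
  · intro m₁ m₂ h
    have := congrArg g h
    simpa [TensorProduct.mk_apply, hg1] using this
  · intro x
    exact ⟨g x, hg2 x⟩
end

section
/- Let A be a commutative ring, I = (f_1, …, f_r) a finitely generated ideal, and M a finite A-module such that the localization M_{f_i} = 0 for each i. Then there exists n ≥ 1 such that I^n M = 0. -/
/-- Let `A` be a commutative ring, `I = (f 1, …, f r)` a finitely generated ideal, and `M` a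
finite `A`-module such that the localization `M_{f i} = 0` for each `i`.  Then there is
`n ≥ 1` with `I^n M = 0`. -/
theorem stmt1 (A : Type*) [CommRing A] (r : ℕ) (f : Fin r → A)
    (M : Type*) [AddCommGroup M] [Module A M] [Module.Finite A M]
    (hloc : ∀ i : Fin r, Subsingleton (LocalizedModule (Submonoid.powers (f i)) M)) :
    ∃ n : ℕ, 1 ≤ n ∧ ∀ a ∈ Ideal.span (Set.range f) ^ n, ∀ m : M, a • m = 0 := by
  have key : ∀ i : Fin r, f i ∈ (Module.annihilator A M).radical := by
    intro i
    have h := (LocalizedModule.subsingleton_iff (S := Submonoid.powers (f i))).mp (hloc i)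
    obtain ⟨s, hs⟩ := Module.Finite.fg_top (R := A) (M := M)
    -- for each generator, get a power killing it
    choose g hg hgz using h
    choose k hk using fun m => (Submonoid.mem_powers_iff _ _).mp (hg m)
    set N := s.sup k with hN
    refine ⟨N, ?_⟩
    rw [Module.mem_annihilator]
    intro m
    have hsub : ∀ m ∈ (Submodule.span A (s : Set M)), f i ^ N • m = 0 := by
      intro m hm
      induction hm using Submodule.span_induction with
      | mem x hx =>
        have : f i ^ N = f i ^ (N - k x) * f i ^ k x := by
          rw [← pow_add, Nat.sub_add_cancel (Finset.le_sup hx)]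
        rw [this, mul_smul, hk x, hgz x, smul_zero]
      | zero => simp
      | add x y _ _ hx hy => rw [smul_add, hx, hy, add_zero]
      | smul a x _ hx => rw [smul_comm, hx, smul_zero]
    exact hsub m (hs ▸ Submodule.mem_top)
  have hle : Ideal.span (Set.range f) ≤ (Module.annihilator A M).radical := by
    rw [Ideal.span_le]
    rintro _ ⟨i, rfl⟩
    exact key i
  obtain ⟨n, hn⟩ := Ideal.exists_pow_le_of_le_radical_of_fg hle
    (Submodule.fg_span (Set.finite_range f))
  refine ⟨max n 1, le_max_right _ _, fun a ha m => ?_⟩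
  have : a ∈ Ideal.span (Set.range f) ^ n :=
    Ideal.pow_le_pow_right (le_max_left n 1) ha
  exact Module.mem_annihilator.mp (hn this) m
end

section
/- Let A → A' be a flat ring homomorphism, x ∈ A an element such that A/xA → A'/xA' is an isomorphism. Then the square of ring maps A → A_x, A → A', with pushout maps to A'_x, is a Milnor square in the sense that the natural map A → A' ×_{A'_x} A_x is an isomorphism. -/
/-!
Write `ρ = algebraMap A A'`. Surjectivity of `A/x → A'/x` gives `A' = ρ A + xⁿ A'` for every `n`.
By the equational criterion, flatness says that the annihilator of `ρ r` in `A'` is generated by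
the annihilator of `r` in `A`; together with the previous fact, every `xᵏ`-torsion element of `A'`
is the image of `xᵏ`-torsion of `A`, and injectivity of `A/x → A'/x` lifts to `A/xⁿ → A'/xⁿ`.

Given `(b, u)` with matching images, clear denominators: `u = a₁/x^N` with `ρ a₁ = x^N b`. Then
`a₁ = x^N e`, so `b - ρ e` is `x^N`-torsion, hence `ρ t` with `x^N t = 0`, and `e + t` is the
preimage. It is unique because an element of `A` killed by `ρ` and by a power of `x` is zero.
-/

section

variable {A A' : Type*} [CommRing A] [CommRing A'] [Algebra A A']

theorem Module.Flat.exists_eq_sum_of_algebraMap_mul_eq_zero [Module.Flat A A'] {r : A} {c : A'}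
    (h : algebraMap A A' r * c = 0) :
    ∃ (k : ℕ) (t : Fin k → A) (y : Fin k → A'),
      c = ∑ j, algebraMap A A' (t j) * y j ∧ ∀ j, r * t j = 0 := by
  obtain ⟨k, t, y, hc, ht⟩ := Module.Flat.isTrivialRelation_of_sum_smul_eq_zero
    (f := ![r]) (x := ![c]) (by simpa [Algebra.smul_def] using h)
  exact ⟨k, t 0, y, by simpa [Algebra.smul_def] using hc 0, by simpa using ht⟩

variable {x : A}

theorem exists_eq_algebraMap_add_pow_mul
    (hsurj : ∀ c : A', ∃ d s, c = algebraMap A A' d + algebraMap A A' x * s) (n : ℕ) (c : A') :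
    ∃ d s, c = algebraMap A A' d + algebraMap A A' x ^ n * s := by
  induction n generalizing c with
  | zero => exact ⟨0, c, by simp⟩
  | succ n ih =>
    obtain ⟨d, s, hc⟩ := ih c
    obtain ⟨d', s', hs⟩ := hsurj s
    exact ⟨d + x ^ n * d', s', by rw [hc, hs]; simp only [map_add, map_mul, map_pow]; ring⟩

theorem exists_eq_algebraMap_add_pow_mul_of_algebraMap_mul_eq_zero [Module.Flat A A']
    (hsurj : ∀ c : A', ∃ d s, c = algebraMap A A' d + algebraMap A A' x * s) (n : ℕ) {r : A}
    {c : A'} (h : algebraMap A A' r * c = 0) :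
    ∃ d s, c = algebraMap A A' d + algebraMap A A' x ^ n * s ∧ r * d = 0 ∧
      algebraMap A A' r * s = 0 := by
  obtain ⟨k, t, y, hc, ht⟩ := Module.Flat.exists_eq_sum_of_algebraMap_mul_eq_zero h
  choose d s hy using fun j ↦ exists_eq_algebraMap_add_pow_mul hsurj n (y j)
  refine ⟨∑ j, t j * d j, ∑ j, algebraMap A A' (t j) * s j, ?_, ?_, ?_⟩
  · rw [hc, Finset.mul_sum, map_sum, ← Finset.sum_add_distrib]
    refine Finset.sum_congr rfl fun j _ ↦ ?_
    rw [hy j, map_mul]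
    ring
  · rw [Finset.mul_sum]
    exact Finset.sum_eq_zero fun j _ ↦ by rw [← mul_assoc, ht j, zero_mul]
  · rw [Finset.mul_sum]
    exact Finset.sum_eq_zero fun j _ ↦ by rw [← mul_assoc, ← map_mul, ht j, map_zero, zero_mul]

theorem exists_eq_algebraMap_of_pow_mul_eq_zero [Module.Flat A A']
    (hsurj : ∀ c : A', ∃ d s, c = algebraMap A A' d + algebraMap A A' x * s) {k : ℕ} {c : A'}
    (h : algebraMap A A' x ^ k * c = 0) :
    ∃ t, c = algebraMap A A' t ∧ x ^ k * t = 0 := by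
  obtain ⟨t, s, hc, ht, hs⟩ := exists_eq_algebraMap_add_pow_mul_of_algebraMap_mul_eq_zero
    hsurj k (r := x ^ k) (by rwa [map_pow])
  refine ⟨t, ?_, ht⟩
  rw [hc, ← map_pow, hs, add_zero]

theorem pow_dvd_of_algebraMap_pow_dvd [Module.Flat A A']
    (hsurj : ∀ c : A', ∃ d s, c = algebraMap A A' d + algebraMap A A' x * s)
    (hinj : ∀ a : A, algebraMap A A' x ∣ algebraMap A A' a → x ∣ a) (n : ℕ) {a : A}
    (h : algebraMap A A' x ^ n ∣ algebraMap A A' a) : x ^ n ∣ a := by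
  induction n generalizing a with
  | zero => simp
  | succ n ih =>
    obtain ⟨r, hr⟩ := h
    obtain ⟨a₁, rfl⟩ := hinj a ⟨algebraMap A A' x ^ n * r, by rw [hr]; ring⟩
    obtain ⟨t, ht, hxt⟩ := exists_eq_algebraMap_of_pow_mul_eq_zero hsurj (k := 1)
      (c := algebraMap A A' a₁ - algebraMap A A' x ^ n * r)
      (by rw [map_mul] at hr; linear_combination hr)
    obtain ⟨e, he⟩ := ih (a := a₁ - t) ⟨r, by rw [map_sub]; linear_combination ht⟩
    exact ⟨e, by linear_combination x * he + hxt⟩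

theorem eq_zero_of_algebraMap_eq_zero_of_pow_mul_eq_zero [Module.Flat A A']
    (hsurj : ∀ c : A', ∃ d s, c = algebraMap A A' d + algebraMap A A' x * s)
    (hinj : ∀ a : A, algebraMap A A' x ∣ algebraMap A A' a → x ∣ a) {k : ℕ} {a : A}
    (ha : algebraMap A A' a = 0) (hk : x ^ k * a = 0) : a = 0 := by
  obtain ⟨d, s, h1, had, -⟩ := exists_eq_algebraMap_add_pow_mul_of_algebraMap_mul_eq_zero
    hsurj k (r := a) (c := 1) (by rw [ha, zero_mul])
  obtain ⟨e, he⟩ := pow_dvd_of_algebraMap_pow_dvd hsurj hinj k (a := 1 - d)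
    ⟨s, by rw [map_sub, map_one]; linear_combination h1⟩
  linear_combination a * he + had + e * hk

theorem exists_algebraMap_eq_and_pow_mul_eq [Module.Flat A A']
    (hsurj : ∀ c : A', ∃ d s, c = algebraMap A A' d + algebraMap A A' x * s)
    (hinj : ∀ a : A, algebraMap A A' x ∣ algebraMap A A' a → x ∣ a) {N : ℕ} {a₁ : A} {b : A'}
    (h : algebraMap A A' a₁ = algebraMap A A' x ^ N * b) :
    ∃ a, algebraMap A A' a = b ∧ x ^ N * a = a₁ := by
  obtain ⟨e, rfl⟩ := pow_dvd_of_algebraMap_pow_dvd hsurj hinj N ⟨b, h⟩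
  obtain ⟨t, ht, hxt⟩ := exists_eq_algebraMap_of_pow_mul_eq_zero hsurj (k := N)
    (c := b - algebraMap A A' e) (by rw [map_mul, map_pow] at h; linear_combination -h)
  exact ⟨e + t, by rw [map_add]; linear_combination -ht, by linear_combination hxt⟩

theorem exists_eq_algebraMap_add_mul_of_surjective_quotientMap
    (h : Function.Surjective (Ideal.quotientMap (Ideal.map (algebraMap A A') (Ideal.span {x}))
      (algebraMap A A') Ideal.le_comap_map)) (c : A') :
    ∃ d s, c = algebraMap A A' d + algebraMap A A' x * s := by
  obtain ⟨z, hz⟩ := h (Ideal.Quotient.mk _ c)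
  obtain ⟨d, rfl⟩ := Ideal.Quotient.mk_surjective z
  rw [Ideal.quotientMap_mk, Ideal.Quotient.eq, Ideal.map_span, Set.image_singleton,
    Ideal.mem_span_singleton'] at hz
  obtain ⟨s, hs⟩ := hz
  exact ⟨d, -s, by linear_combination hs⟩

theorem dvd_of_algebraMap_dvd_of_injective_quotientMap
    (h : Function.Injective (Ideal.quotientMap (Ideal.map (algebraMap A A') (Ideal.span {x}))
      (algebraMap A A') Ideal.le_comap_map)) (a : A)
    (ha : algebraMap A A' x ∣ algebraMap A A' a) : x ∣ a := by
  rw [← Ideal.mem_span_singleton, ← Ideal.Quotient.eq_zero_iff_mem]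
  refine h ?_
  rw [Ideal.quotientMap_mk, map_zero, Ideal.Quotient.eq_zero_iff_mem, Ideal.map_span,
    Set.image_singleton, Ideal.mem_span_singleton]
  exact ha

theorem exists_algebraMap_eq_pow_mul_of_algebraMap_eq_awayMapₐ {b : A'}
    {u : Localization.Away x}
    (h : algebraMap A' (Localization.Away (algebraMap A A' x)) b =
      Localization.awayMapₐ (Algebra.ofId A A') x u) :
    ∃ N a₁, algebraMap A A' a₁ = algebraMap A A' x ^ N * b ∧
      u * algebraMap A (Localization.Away x) x ^ N = algebraMap A (Localization.Away x) a₁ := by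
  set φ := Localization.awayMapₐ (Algebra.ofId A A') x
  have hφ (a : A) : φ (algebraMap A _ a) =
      algebraMap A' (Localization.Away (algebraMap A A' x)) (algebraMap A A' a) := by
    rw [AlgHom.commutes, ← IsScalarTower.algebraMap_apply]; rfl
  obtain ⟨n, a, hu⟩ := IsLocalization.Away.surj x u
  have key : algebraMap A' (Localization.Away (algebraMap A A' x)) (algebraMap A A' a) =
      algebraMap A' _ (algebraMap A A' x ^ n * b) := by
    rw [← hφ, ← hu, map_mul, map_pow, hφ, ← h, map_mul, map_pow, mul_comm]; rfl
  obtain ⟨m, hm⟩ := IsLocalization.Away.exists_of_eq (algebraMap A A' x) key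
  refine ⟨m + n, x ^ m * a, by rw [map_mul, map_pow, hm, pow_add]; ring, ?_⟩
  rw [pow_add, map_mul, map_pow, ← hu]
  ring

end

/-- Let `A → A'` be a flat ring homomorphism and `x ∈ A` an element such that
`A/xA → A'/xA'` is an isomorphism.  Then the natural map `A → A' ×_{A'_x} A_x` is an
isomorphism, i.e. the square is a Milnor square: for every `b : A'` and `u : A_x` with the
same image in `A'_x` there is a unique `a : A` mapping to `b` and `u`. -/
theorem stmt6 (A : Type*) [CommRing A] (A' : Type*) [CommRing A'] [Algebra A A']
    [Module.Flat A A'] (x : A)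
    (hiso : Function.Bijective
      (Ideal.quotientMap (Ideal.map (algebraMap A A') (Ideal.span {x})) (algebraMap A A')
        Ideal.le_comap_map)) :
    ∀ (b : A') (u : Localization.Away x),
      algebraMap A' (Localization.Away (algebraMap A A' x)) b =
        Localization.awayMapₐ (Algebra.ofId A A') x u →
      ∃! a : A, algebraMap A A' a = b ∧ algebraMap A (Localization.Away x) a = u := by
  intro b u h
  have hsurj := exists_eq_algebraMap_add_mul_of_surjective_quotientMap hiso.2
  have hinj := dvd_of_algebraMap_dvd_of_injective_quotientMap hiso.1
  obtain ⟨N, a₁, hb, hu⟩ := exists_algebraMap_eq_pow_mul_of_algebraMap_eq_awayMapₐ h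
  obtain ⟨a, rfl, rfl⟩ := exists_algebraMap_eq_and_pow_mul_eq hsurj hinj hb
  have hau : algebraMap A (Localization.Away x) a = u :=
    (IsLocalization.Away.algebraMap_pow_isUnit x N).mul_right_cancel <| by
      rw [hu, map_mul, map_pow, mul_comm]
  refine ⟨a, ⟨rfl, hau⟩, fun a' ⟨hb', hu'⟩ ↦ ?_⟩
  obtain ⟨k, hk⟩ := IsLocalization.Away.exists_of_eq x (hu'.trans hau.symm)
  exact sub_eq_zero.mp <| eq_zero_of_algebraMap_eq_zero_of_pow_mul_eq_zero hsurj hinj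
    (by rw [map_sub, hb', sub_self]) (by rw [mul_sub, hk, sub_self])
end

section
/- Let A → A' be a faithfully flat ring map and x ∈ A with A/xA → A'/xA' an isomorphism. Let M be an A-module. If A' ⊗_A M is a flat A'-module and M_x is a flat A_x-module, then M is a flat A-module. -/
open TensorProduct

set_option maxHeartbeats 1600000 in
set_option synthInstance.maxHeartbeats 400000 in
/-- Let `A → A'` be a faithfully flat ring map and `x ∈ A` with `A/xA → A'/xA'` an
isomorphism.  Let `M` be an `A`-module.  If `A' ⊗[A] M` is a flat `A'`-module and `M_x` is a
flat `A_x`-module, then `M` is a flat `A`-module. -/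
theorem stmt8 (A : Type*) [CommRing A] (A' : Type*) [CommRing A'] [Algebra A A']
    [Module.FaithfullyFlat A A'] (x : A)
    (hiso : Function.Bijective
      (Ideal.quotientMap (Ideal.map (algebraMap A A') (Ideal.span {x})) (algebraMap A A')
        Ideal.le_comap_map))
    (M : Type*) [AddCommGroup M] [Module A M]
    (h1 : Module.Flat A' (A' ⊗[A] M))
    (h2 : Module.Flat (Localization.Away x) (LocalizedModule (Submonoid.powers x) M)) :
    Module.Flat A M := by
  rw [Module.Flat.iff_rTensor_injective']
  intro I
  set f : I ⊗[A] M →ₗ[A] A ⊗[A] M := LinearMap.rTensor M I.subtype with hf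
  -- Step 1: it suffices to show the base-changed map is injective.
  suffices key : Function.Injective (LinearMap.lTensor A' f) by
    rw [← LinearMap.ker_eq_bot, eq_bot_iff]
    intro m hm
    set K := LinearMap.ker f
    have hcomp : LinearMap.lTensor A' f ∘ₗ LinearMap.lTensor A' K.subtype = 0 := by
      rw [← LinearMap.lTensor_comp]
      have : f ∘ₗ K.subtype = 0 := by ext ⟨k, hk⟩; exact hk
      rw [this, LinearMap.lTensor_zero]
    have hKzero : ∀ z, LinearMap.lTensor A' (K.subtype : K →ₗ[A] I ⊗[A] M) z = 0 := by
      intro z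
      apply key
      rw [← LinearMap.comp_apply, hcomp, LinearMap.map_zero]
      rfl
    have hKinj : Function.Injective (LinearMap.lTensor A' (K.subtype : K →ₗ[A] I ⊗[A] M)) :=
      Module.Flat.lTensor_preserves_injective_linearMap _ K.injective_subtype
    have : Subsingleton (A' ⊗[A] K) :=
      ⟨fun a b => hKinj (by rw [hKzero a, hKzero b])⟩
    have : Subsingleton K := Module.FaithfullyFlat.lTensor_reflects_triviality A A' K
    simpa using congrArg Subtype.val (Subsingleton.elim (⟨m, hm⟩ : K) ⟨0, K.zero_mem⟩)
  -- Step 2: prove injectivity of the base-changed map via the isomorphisms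
  let c1 : (A' ⊗[A] I) ⊗[A'] (A' ⊗[A] M) ≃ₗ[A'] A' ⊗[A] (I ⊗[A] M) :=
    TensorProduct.AlgebraTensorModule.cancelBaseChange A A' A' (A' ⊗[A] I) M ≪≫ₗ
      TensorProduct.AlgebraTensorModule.assoc A A A' A' I M
  let c2 : (A' ⊗[A] A) ⊗[A'] (A' ⊗[A] M) ≃ₗ[A'] A' ⊗[A] (A ⊗[A] M) :=
    TensorProduct.AlgebraTensorModule.cancelBaseChange A A' A' (A' ⊗[A] A) M ≪≫ₗ
      TensorProduct.AlgebraTensorModule.assoc A A A' A' A M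
  let g : (A' ⊗[A] I) ⊗[A'] (A' ⊗[A] M) →ₗ[A'] (A' ⊗[A] A) ⊗[A'] (A' ⊗[A] M) :=
    LinearMap.rTensor (A' ⊗[A] M) ((I.subtype : I →ₗ[A] A).baseChange A')
  have hbc : Function.Injective ((I.subtype : I →ₗ[A] A).baseChange A') := by
    have : Function.Injective (LinearMap.lTensor A' (I.subtype : I →ₗ[A] A)) :=
      Module.Flat.lTensor_preserves_injective_linearMap _ I.injective_subtype
    exact this
  have hg : Function.Injective g :=
    Module.Flat.rTensor_preserves_injective_linearMap _ hbc
  have hsquare : ∀ z, LinearMap.lTensor A' f (c1 z) = c2 (g z) := by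
    intro z
    induction z using TensorProduct.induction_on with
    | zero => simp
    | add p q hp hq => simp only [map_add, hp, hq]
    | tmul p q =>
      induction p using TensorProduct.induction_on with
      | zero => simp [TensorProduct.zero_tmul]
      | add p1 p2 hp1 hp2 => simp only [TensorProduct.add_tmul, map_add, hp1, hp2]
      | tmul a' i =>
        induction q using TensorProduct.induction_on with
        | zero => simp [TensorProduct.tmul_zero]
        | add q1 q2 hq1 hq2 => simp only [TensorProduct.tmul_add, map_add, hq1, hq2]
        | tmul b' m =>
          simp only [c1, c2, g, hf, LinearEquiv.trans_apply,
            TensorProduct.AlgebraTensorModule.cancelBaseChange_tmul,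
            TensorProduct.AlgebraTensorModule.assoc_tmul,
            LinearMap.rTensor_tmul, LinearMap.lTensor_tmul, LinearMap.baseChange_tmul,
            TensorProduct.smul_tmul', smul_eq_mul, Submodule.coe_subtype]
  intro u v huv
  obtain ⟨u', rfl⟩ := c1.surjective u
  obtain ⟨v', rfl⟩ := c1.surjective v
  rw [hsquare, hsquare] at huv
  exact congrArg c1 (hg (c2.injective huv))
end

section
/- Let A be a commutative ring and x ∈ A, and let A' be another A-algebra such that A → A' induces an isomorphism A/x^nA → A'/x^nA' for all n ≥ 1 and Tor_1^A(A/xA, A') = 0. Assume furthermore that A embeds into A_x and A' embeds into A'_x (i.e., the units η: A → A_x and η': A' → A'_x are injective). Then A is integrally closed in A_x if and only if A' is integrally closed in A'_x. -/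
universe u

open CategoryTheory Polynomial Finset


private lemma away_unit16 {R : Type*} [CommRing R] (t : R) (n : ℕ) :
    IsUnit (algebraMap R (Localization.Away t) (t ^ n)) :=
  IsLocalization.map_units (M := Submonoid.powers t) (Localization.Away t) ⟨t ^ n, n, rfl⟩

private lemma away_surj16 {R : Type*} [CommRing R] (t : R) (w : Localization.Away t) :
    ∃ (c : R) (n : ℕ), w * algebraMap R (Localization.Away t) (t ^ n)
      = algebraMap R (Localization.Away t) c := by
  obtain ⟨⟨c, s⟩, hs⟩ := IsLocalization.surj (Submonoid.powers t) w
  obtain ⟨n, hn⟩ := s.2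
  exact ⟨c, n, by rw [show t ^ n = (s : R) from hn]; exact hs⟩

private lemma key_sum16 {R : Type*} [CommRing R] (t : R) (w : Localization.Away t) (c : R)
    (n m : ℕ) (h : w * algebraMap R (Localization.Away t) (t ^ n)
      = algebraMap R (Localization.Away t) c) (q : ℕ → R) :
    algebraMap R (Localization.Away t)
        (∑ i ∈ Finset.range (m + 1), q i * t ^ (n * (m - i)) * c ^ i)
      = algebraMap R (Localization.Away t) (t ^ (n * m)) *
        ∑ i ∈ Finset.range (m + 1), algebraMap R (Localization.Away t) (q i) * w ^ i := by
  rw [map_sum, Finset.mul_sum]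
  refine Finset.sum_congr rfl fun i hi => ?_
  have hi' : i ≤ m := Nat.lt_succ_iff.mp (Finset.mem_range.mp hi)
  have hle : n * (m - i) + n * i = n * m := by rw [← Nat.mul_add, Nat.sub_add_cancel hi']
  have hc : algebraMap R (Localization.Away t) c
      = w * (algebraMap R (Localization.Away t) t) ^ n := by rw [← h, map_pow]
  rw [map_mul, map_mul, map_pow, map_pow, hc, mul_pow, ← pow_mul, ← hle, pow_add, map_mul, map_pow, map_pow]
  ring

private lemma exists_monic16 {R S : Type*} [CommRing R] [CommRing S] [Algebra R S]
    (w : S) (m : ℕ) (hm : 1 ≤ m) (q : ℕ → R) (hqm : q m = 1)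
    (h0 : ∑ i ∈ Finset.range (m + 1), algebraMap R S (q i) * w ^ i = 0) :
    IsIntegral R w := by
  refine ⟨X ^ m + ∑ i ∈ Finset.range m, C (q i) * X ^ i, ?_, ?_⟩
  · apply monic_X_pow_add
    rw [Finset.sum_range fun i => C (q i) * X ^ i]
    exact_mod_cast degree_sum_fin_lt fun i : Fin m => q i
  · have : Polynomial.eval₂ (algebraMap R S) w (X ^ m + ∑ i ∈ Finset.range m, C (q i) * X ^ i)
        = ∑ i ∈ Finset.range (m + 1), algebraMap R S (q i) * w ^ i := by
      rw [Finset.sum_range_succ, hqm, map_one, one_mul]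
      simp [eval₂_finset_sum, add_comm]
    rw [this, h0]

/-- Let `A` be a commutative ring, `x ∈ A`, and `A'` an `A`-algebra such that
`A/x^n A → A'/x^n A'` is an isomorphism for all `n ≥ 1` and `Tor_1^A(A/xA, A') = 0`.
Assume that `A → A_x` and `A' → A'_x` are injective.  Then `A` is integrally closed in
`A_x` if and only if `A'` is integrally closed in `A'_x`. -/
theorem stmt16 (A : Type u) [CommRing A] (A' : Type u) [CommRing A'] [Algebra A A'] (x : A)
    (hiso : ∀ n : ℕ, 1 ≤ n →
      Function.Bijective
        (Ideal.quotientMap (Ideal.map (algebraMap A A') (Ideal.span {x} ^ n)) (algebraMap A A')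
          Ideal.le_comap_map))
    (htor1 : Limits.IsZero (((Tor (ModuleCat A) 1).obj (ModuleCat.of A (A ⧸ Ideal.span {x}))).obj
      (ModuleCat.of A A')))
    (hη : Function.Injective (algebraMap A (Localization.Away x)))
    (hη' : Function.Injective (algebraMap A' (Localization.Away (algebraMap A A' x)))) :
    (∀ y : Localization.Away x, IsIntegral A y → ∃ a : A, algebraMap A (Localization.Away x) a = y)
      ↔
    (∀ y' : Localization.Away (algebraMap A A' x), IsIntegral A' y' →
      ∃ a' : A', algebraMap A' (Localization.Away (algebraMap A A' x)) a' = y') := by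
  clear htor1
  set x' : A' := algebraMap A A' x with hx'def
  have hJ : ∀ N : ℕ, Ideal.map (algebraMap A A') (Ideal.span {x} ^ N)
      = Ideal.span {x' ^ N} := by
    intro N
    rw [Ideal.span_singleton_pow, Ideal.map_span, Set.image_singleton, map_pow]
  -- transfer of divisibility by x^N from A' down to A
  have hdiv : ∀ N : ℕ, 1 ≤ N → ∀ a : A,
      (∃ e' : A', algebraMap A A' a = x' ^ N * e') → ∃ b : A, a = x ^ N * b := by
    intro N hN a ⟨e', he⟩
    have hmem : algebraMap A A' a ∈ Ideal.map (algebraMap A A') (Ideal.span {x} ^ N) := by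
      rw [hJ N, Ideal.mem_span_singleton]
      exact ⟨e', he⟩
    have h0 : Ideal.quotientMap (Ideal.map (algebraMap A A') (Ideal.span {x} ^ N))
        (algebraMap A A') Ideal.le_comap_map (Ideal.Quotient.mk _ a) = 0 := by
      rw [Ideal.quotientMap_mk, Ideal.Quotient.eq_zero_iff_mem]
      exact hmem
    have : Ideal.Quotient.mk (Ideal.span {x} ^ N) a = 0 := by
      apply (hiso N hN).1
      rw [h0, map_zero]
    rw [Ideal.Quotient.eq_zero_iff_mem, Ideal.span_singleton_pow,
      Ideal.mem_span_singleton] at this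
    exact this
  -- approximation of elements of A' by elements of A mod x'^N
  have happrox : ∀ N : ℕ, 1 ≤ N → ∀ a' : A',
      ∃ (a : A) (e' : A'), a' = algebraMap A A' a + x' ^ N * e' := by
    intro N hN a'
    obtain ⟨z, hz⟩ := (hiso N hN).2 (Ideal.Quotient.mk _ a')
    obtain ⟨a, rfl⟩ := Ideal.Quotient.mk_surjective z
    rw [Ideal.quotientMap_mk] at hz
    have : algebraMap A A' a - a' ∈ Ideal.span {x' ^ N} := by
      rw [← hJ N]
      exact Ideal.Quotient.eq.mp hz
    obtain ⟨d, hd⟩ := Ideal.mem_span_singleton.mp this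
    exact ⟨a, -d, by rw [mul_neg, ← hd]; ring⟩
  constructor
  · intro hA y' hy'
    obtain ⟨a''₀, n₀, hrep₀⟩ := away_surj16 x' y'
    set n := n₀ + 1 with hndef
    have hn : 1 ≤ n := Nat.le_add_left 1 n₀
    have hrep : y' * algebraMap A' (Localization.Away x') (x' ^ n)
        = algebraMap A' (Localization.Away x') (a''₀ * x') := by
      rw [hndef, pow_succ, map_mul, ← mul_assoc, hrep₀, ← map_mul]
    obtain ⟨a, e₀', ha⟩ := happrox n hn (a''₀ * x')
    set z' := y' - algebraMap A' (Localization.Away x') e₀' with hz'def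
    have hz : z' * algebraMap A' (Localization.Away x') (x' ^ n)
        = algebraMap A' (Localization.Away x') (algebraMap A A' a) := by
      rw [hz'def, sub_mul, hrep, ha, map_add, map_mul]
      ring
    have hz'int : IsIntegral A' z' := hy'.sub isIntegral_algebraMap
    obtain ⟨p', hmon, hp'⟩ := hz'int
    set m := p'.natDegree with hmdef
    by_cases hm0 : m = 0
    · have h1 : p' = 1 := hmon.natDegree_eq_zero.mp hm0
      rw [h1, eval₂_one] at hp'
      have : Subsingleton (Localization.Away x') := subsingleton_of_zero_eq_one hp'.symm
      exact ⟨0, Subsingleton.elim _ _⟩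
    have hm : 1 ≤ m := Nat.one_le_iff_ne_zero.mpr hm0
    have hsum' : ∑ i ∈ Finset.range (m + 1),
        algebraMap A' (Localization.Away x') (p'.coeff i) * z' ^ i = 0 := by
      rw [← eval₂_eq_sum_range]; exact hp'
    have hS' : ∑ i ∈ Finset.range (m + 1),
        p'.coeff i * x' ^ (n * (m - i)) * (algebraMap A A' a) ^ i = 0 := by
      apply hη'
      rw [map_zero, key_sum16 x' z' (algebraMap A A' a) n m hz, hsum', mul_zero]
    choose aa ee hee using fun i : ℕ => happrox (n * m + 1) (Nat.le_add_left 1 (n * m)) (p'.coeff i)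
    set qa : ℕ → A := fun i => if i = m then 1 else aa i with hqadef
    set qe : ℕ → A' := fun i => if i = m then 0 else ee i with hqedef
    have hco : ∀ i, p'.coeff i = algebraMap A A' (qa i) + x' ^ (n * m + 1) * qe i := by
      intro i
      by_cases h : i = m
      · subst h
        simp only [hqadef, hqedef, if_pos rfl, map_one, mul_zero, add_zero]
        rw [hmdef]; exact hmon.coeff_natDegree
      · simp only [hqadef, hqedef, if_neg h]
        exact hee i
    set S : A := ∑ i ∈ Finset.range (m + 1), qa i * x ^ (n * (m - i)) * a ^ i with hSdef
    set E : A' := ∑ i ∈ Finset.range (m + 1),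
        qe i * x' ^ (n * (m - i)) * (algebraMap A A' a) ^ i with hEdef
    have hfS : algebraMap A A' S = x' ^ (n * m + 1) * (-E) := by
      rw [hSdef, map_sum]
      have h1 : ∀ i ∈ Finset.range (m + 1), algebraMap A A' (qa i * x ^ (n * (m - i)) * a ^ i)
          = p'.coeff i * x' ^ (n * (m - i)) * (algebraMap A A' a) ^ i
            - x' ^ (n * m + 1) * (qe i * x' ^ (n * (m - i)) * (algebraMap A A' a) ^ i) := by
        intro i _
        rw [map_mul, map_mul, map_pow, map_pow, hco i, ← hx'def]
        ring
      rw [Finset.sum_congr rfl h1, Finset.sum_sub_distrib, hS', hEdef, ← Finset.mul_sum]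
      ring
    obtain ⟨b, hSb⟩ := hdiv (n * m + 1) (Nat.le_add_left 1 (n * m)) S ⟨-E, hfS⟩
    set qt : ℕ → A := fun i => if i = 0 then qa 0 - x * b else qa i with hqtdef
    have hqtm : qt m = 1 := by
      simp [hqtdef, hqadef, hm0]
    have hsumA : ∑ i ∈ Finset.range (m + 1), qt i * x ^ (n * (m - i)) * a ^ i = 0 := by
      have h2 : ∀ i ∈ Finset.range (m + 1), qt i * x ^ (n * (m - i)) * a ^ i
          = qa i * x ^ (n * (m - i)) * a ^ i
            - (if i = 0 then x ^ (n * m + 1) * b else 0) := by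
        intro i _
        by_cases h : i = 0
        · subst h
          simp only [hqtdef, if_pos, Nat.sub_zero, pow_zero, mul_one]
          norm_num [pow_succ]
          ring
        · simp only [hqtdef, if_neg h, sub_zero]
      rw [Finset.sum_congr rfl h2, Finset.sum_sub_distrib, ← hSdef, hSb]
      simp
    set y : Localization.Away x :=
      IsLocalization.mk' (Localization.Away x) a (⟨x ^ n, n, rfl⟩ : Submonoid.powers x) with hydef
    have hyrep : y * algebraMap A (Localization.Away x) (x ^ n)
        = algebraMap A (Localization.Away x) a := IsLocalization.mk'_spec _ _ _
    have hsumy : ∑ i ∈ Finset.range (m + 1),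
        algebraMap A (Localization.Away x) (qt i) * y ^ i = 0 := by
      have hkey := key_sum16 x y a n m hyrep qt
      rw [hsumA, map_zero] at hkey
      exact ((away_unit16 x (n * m)).mul_right_eq_zero).mp hkey.symm
    have hyint : IsIntegral A y := exists_monic16 y m hm qt hqtm hsumy
    obtain ⟨d, hd⟩ := hA y hyint
    have had : a = d * x ^ n := by
      apply hη
      rw [← hyrep, ← hd, map_mul, map_pow]
    refine ⟨algebraMap A A' d + e₀', ?_⟩
    have hz'e : z' = algebraMap A' (Localization.Away x') (algebraMap A A' d) := by
      have h3 : z' * algebraMap A' (Localization.Away x') (x' ^ n)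
          = algebraMap A' (Localization.Away x') (algebraMap A A' d)
            * algebraMap A' (Localization.Away x') (x' ^ n) := by
        rw [hz, had, map_mul, map_pow, ← hx'def, map_mul]
      exact (away_unit16 x' n).mul_right_cancel h3
    rw [map_add, ← hz'e, hz'def]
    ring
  · intro hA' y hy
    obtain ⟨p, hmon, hp⟩ := hy
    set m := p.natDegree with hmdef
    by_cases hm0 : m = 0
    · have h1 : p = 1 := hmon.natDegree_eq_zero.mp hm0
      rw [h1, eval₂_one] at hp
      have : Subsingleton (Localization.Away x) := subsingleton_of_zero_eq_one hp.symm
      exact ⟨0, Subsingleton.elim _ _⟩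
    obtain ⟨a, n, hrep⟩ := away_surj16 x y
    by_cases hn0 : n = 0
    · exact ⟨a, by rw [← hrep, hn0]; simp⟩
    have hn : 1 ≤ n := Nat.one_le_iff_ne_zero.mpr hn0
    -- translate integrality into an element identity in A
    have hsum : ∑ i ∈ Finset.range (m + 1),
        algebraMap A (Localization.Away x) (p.coeff i) * y ^ i = 0 := by
      rw [← eval₂_eq_sum_range]; exact hp
    have hT : ∑ i ∈ Finset.range (m + 1), p.coeff i * x ^ (n * (m - i)) * a ^ i = 0 := by
      apply hη
      rw [map_zero, key_sum16 x y a n m hrep, hsum, mul_zero]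
    -- push it to A'
    have hT' : ∑ i ∈ Finset.range (m + 1),
        algebraMap A A' (p.coeff i) * x' ^ (n * (m - i)) * (algebraMap A A' a) ^ i = 0 := by
      have := congrArg (algebraMap A A') hT
      rw [map_sum, map_zero] at this
      rw [← this]
      refine Finset.sum_congr rfl fun i _ => ?_
      rw [map_mul, map_mul, map_pow, map_pow, hx'def]
    -- the image point in the localization of A'
    set y'' : Localization.Away x' :=
      IsLocalization.mk' (Localization.Away x') (algebraMap A A' a)
        (⟨x' ^ n, n, rfl⟩ : Submonoid.powers x') with hy''def
    have hrep'' : y'' * algebraMap A' (Localization.Away x') (x' ^ n)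
        = algebraMap A' (Localization.Away x') (algebraMap A A' a) :=
      IsLocalization.mk'_spec _ _ _
    have hsum'' : ∑ i ∈ Finset.range (m + 1),
        algebraMap A' (Localization.Away x') (algebraMap A A' (p.coeff i)) * y'' ^ i = 0 := by
      have hkey := key_sum16 x' y'' (algebraMap A A' a) n m hrep''
        (fun i => algebraMap A A' (p.coeff i))
      rw [hT', map_zero] at hkey
      exact ((away_unit16 x' (n * m)).mul_right_eq_zero).mp hkey.symm
    have hint'' : IsIntegral A' y'' := by
      refine exists_monic16 y'' m (Nat.one_le_iff_ne_zero.mpr hm0)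
        (fun i => algebraMap A A' (p.coeff i)) ?_ hsum''
      show algebraMap A A' (p.coeff m) = 1
      rw [hmdef, hmon.coeff_natDegree, map_one]
    obtain ⟨a', ha'⟩ := hA' y'' hint''
    have hfa : algebraMap A A' a = a' * x' ^ n := by
      apply hη'
      rw [← hrep'', ← ha', map_mul, map_pow]
    obtain ⟨b, hb⟩ := hdiv n hn a ⟨a', by rw [hfa]; ring⟩
    refine ⟨b, ?_⟩
    have : algebraMap A (Localization.Away x) b * algebraMap A (Localization.Away x) (x ^ n)
        = y * algebraMap A (Localization.Away x) (x ^ n) := by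
      rw [hrep, ← map_mul, hb]; ring_nf
    exact (away_unit16 x n).mul_right_cancel this
end

section
/- Let A → A' be a flat ring homomorphism and x ∈ A such that A/xA → A'/xA' is an isomorphism. Then for any two A-modules M, N the map Hom_A(M, N) → Hom_{A'}(A'⊗M, A'⊗N) ×_{Hom_{A'_x}(A'_x⊗M, A'_x⊗N)} Hom_{A_x}(M_x, N_x) is bijective. -/
open TensorProduct

section BLaux

variable {A : Type*} [CommRing A] {A' : Type*} [CommRing A'] [Algebra A A'] {x : A}

/-- If `P` is killed by `x`, then `P → A' ⊗ P` is bijective. -/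
theorem bl_mk_bijective
    (hsurj : ∀ a' : A', ∃ a : A, algebraMap A A' x ∣ (a' - algebraMap A A' a))
    (hinj : ∀ a : A, algebraMap A A' x ∣ algebraMap A A' a → x ∣ a)
    (P : Type*) [AddCommGroup P] [Module A P] (hP : ∀ p : P, x • p = 0) :
    Function.Bijective (TensorProduct.mk A A' P 1) := by
  have hz : ∀ a : A, x ∣ a → ∀ p : P, a • p = 0 := by
    rintro a ⟨d, rfl⟩ p
    rw [mul_smul, hP]
  have hact : ∀ a b : A, (algebraMap A A' x ∣ algebraMap A A' (a - b)) →
      ∀ p : P, a • p = b • p := by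
    intro a b h p
    have h0 := hz _ (hinj _ h) p
    rw [sub_smul, sub_eq_zero] at h0
    exact h0
  choose s hs using hsurj
  let B : A' →ₗ[A] P →ₗ[A] P :=
    { toFun := fun a' => s a' • (LinearMap.id : P →ₗ[A] P)
      map_add' := by
        intro a' b'
        ext p
        simp only [LinearMap.smul_apply, LinearMap.id_apply, LinearMap.add_apply]
        rw [← add_smul]
        apply hact
        obtain ⟨c1, e1⟩ := hs a'
        obtain ⟨c2, e2⟩ := hs b'
        obtain ⟨c3, e3⟩ := hs (a' + b')
        refine ⟨c1 + c2 - c3, ?_⟩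
        rw [map_sub, map_add]
        linear_combination e1 + e2 - e3
      map_smul' := by
        intro a a'
        ext p
        simp only [LinearMap.smul_apply, LinearMap.id_apply, RingHom.id_apply]
        rw [← mul_smul, show a • a' = algebraMap A A' a * a' from Algebra.smul_def a a']
        apply hact
        obtain ⟨c1, e1⟩ := hs a'
        obtain ⟨c3, e3⟩ := hs (algebraMap A A' a * a')
        refine ⟨algebraMap A A' a * c1 - c3, ?_⟩
        rw [map_sub, map_mul]
        linear_combination (algebraMap A A' a) * e1 - e3 }
  have hBapp : ∀ (a' : A') (p : P), TensorProduct.lift B (a' ⊗ₜ[A] p) = s a' • p := by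
    intro a' p
    simp [B]
  have hg1 : ∀ p : P, TensorProduct.lift B ((1 : A') ⊗ₜ[A] p) = p := by
    intro p
    rw [hBapp]
    have : s (1 : A') • p = (1 : A) • p := by
      apply hact
      obtain ⟨c, e⟩ := hs 1
      exact ⟨-c, by rw [map_sub, map_one]; linear_combination -e⟩
    rw [this, one_smul]
  constructor
  · intro p q h
    have := congrArg (TensorProduct.lift B) h
    simpa only [TensorProduct.mk_apply, hg1] using this
  · intro u
    induction u using TensorProduct.induction_on with
    | zero => exact ⟨0, map_zero _⟩
    | tmul a' p =>
      refine ⟨s a' • p, ?_⟩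
      obtain ⟨c, e⟩ := hs a'
      have h1 : a' ⊗ₜ[A] p
          = (algebraMap A A' (s a')) ⊗ₜ[A] p + (algebraMap A A' x * c) ⊗ₜ[A] p := by
        rw [← TensorProduct.add_tmul]
        congr 1
        linear_combination e
      have h2 : (algebraMap A A' x * c) ⊗ₜ[A] p = (0 : A' ⊗[A] P) := by
        rw [← Algebra.smul_def, TensorProduct.smul_tmul, hP, TensorProduct.tmul_zero]
      have h3 : (algebraMap A A' (s a')) ⊗ₜ[A] p = (1 : A') ⊗ₜ[A] (s a' • p) := by
        rw [Algebra.algebraMap_eq_smul_one, TensorProduct.smul_tmul]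
      rw [TensorProduct.mk_apply, ← h3, h1, h2, add_zero]
    | add u v hu hv =>
      obtain ⟨p, hp⟩ := hu
      obtain ⟨q, hq⟩ := hv
      exact ⟨p + q, by rw [map_add, hp, hq]⟩


variable (hsurj : ∀ a' : A', ∃ a : A, algebraMap A A' x ∣ (a' - algebraMap A A' a))
variable (hinj : ∀ a : A, algebraMap A A' x ∣ algebraMap A A' a → x ∣ a)
variable (N : Type*) [AddCommGroup N] [Module A N]

include hsurj hinj

/-- `x`-torsion elements of `A' ⊗ N` come from `x`-torsion elements of `N`. -/
theorem bl_torsion_lift [Module.Flat A A'] (u : A' ⊗[A] N) (hu : x • u = 0) :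
    ∃ t : N, x • t = 0 ∧ (1 : A') ⊗ₜ[A] t = u := by
  set φ : N →ₗ[A] N := LinearMap.lsmul A N x with hφ
  have hexact := Module.Flat.lTensor_exact A' (LinearMap.exact_subtype_ker_map φ)
  have hmap : ∀ w : A' ⊗[A] N, LinearMap.lTensor A' φ w = x • w := by
    intro w
    induction w using TensorProduct.induction_on with
    | zero => simp
    | tmul a n => simp [φ, TensorProduct.tmul_smul]
    | add w₁ w₂ h₁ h₂ => rw [map_add, h₁, h₂, smul_add]
  obtain ⟨z, hz⟩ := (hexact u).mp (by rw [hmap]; exact hu)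
  have hPk : ∀ p : LinearMap.ker φ, x • p = 0 := by
    intro p
    ext
    exact p.2
  obtain ⟨t, ht⟩ := (bl_mk_bijective hsurj hinj (LinearMap.ker φ) hPk).2 z
  refine ⟨(t : N), t.2, ?_⟩
  rw [← hz, ← ht]
  simp

/-- If `1 ⊗ n` is divisible by `x` in `A' ⊗ N` then `n` is divisible by `x` in `N`. -/
theorem bl_div (n : N) (w : A' ⊗[A] N) (h : (1 : A') ⊗ₜ[A] n = x • w) :
    ∃ n₂ : N, n = x • n₂ := by
  set φ : N →ₗ[A] N := LinearMap.lsmul A N x with hφ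
  set π := (LinearMap.range φ).mkQ with hπ
  have hP : ∀ q : N ⧸ LinearMap.range φ, x • q = 0 := by
    intro q
    obtain ⟨n, rfl⟩ := Submodule.mkQ_surjective _ q
    rw [← map_smul, Submodule.mkQ_apply, Submodule.Quotient.mk_eq_zero]
    exact ⟨n, rfl⟩
  have hkill : ∀ z : A' ⊗[A] (N ⧸ LinearMap.range φ), x • z = 0 := by
    intro z
    induction z using TensorProduct.induction_on with
    | zero => simp
    | tmul a q => rw [← TensorProduct.tmul_smul, hP, TensorProduct.tmul_zero]
    | add z₁ z₂ h₁ h₂ => rw [smul_add, h₁, h₂, add_zero]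
  have h2 : (1 : A') ⊗ₜ[A] (π n) = 0 := by
    have h3 := congrArg (LinearMap.lTensor A' π) h
    rw [LinearMap.lTensor_tmul, map_smul, hkill] at h3
    exact h3
  have h4 : π n = 0 := by
    apply (bl_mk_bijective hsurj hinj _ hP).1 (a₁ := π n) (a₂ := 0)
    simpa using h2
  obtain ⟨n₂, hn₂⟩ := (Submodule.Quotient.mk_eq_zero _).mp h4
  exact ⟨n₂, hn₂.symm⟩

/-- An `x`-torsion element of `N` mapping to `0` in `A' ⊗ N` is zero. -/
theorem bl_ker_inj [Module.Flat A A'] (c : N) (h1 : x • c = 0)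
    (h2 : (1 : A') ⊗ₜ[A] c = 0) : c = 0 := by
  set φ : N →ₗ[A] N := LinearMap.lsmul A N x with hφ
  have hPk : ∀ p : LinearMap.ker φ, x • p = 0 := fun p => by ext; exact p.2
  have hc : c ∈ LinearMap.ker φ := h1
  have hT := Module.Flat.lTensor_preserves_injective_linearMap (M := A')
    (LinearMap.ker φ).subtype Subtype.val_injective
  have h3 : (1 : A') ⊗ₜ[A] (⟨c, hc⟩ : LinearMap.ker φ) = 0 := by
    apply hT
    simpa using h2
  have h4 := (bl_mk_bijective hsurj hinj _ hPk).1 (a₁ := ⟨c, hc⟩) (a₂ := 0) (by simpa using h3)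
  exact congrArg Subtype.val h4

theorem bl_ker_inj_pow [Module.Flat A A'] (k : ℕ) (c : N) (h1 : x ^ k • c = 0)
    (h2 : (1 : A') ⊗ₜ[A] c = 0) : c = 0 := by
  induction k generalizing c with
  | zero => rwa [pow_zero, one_smul] at h1
  | succ k ih =>
    have hxc : x • c = 0 := by
      apply ih (x • c)
      · rw [smul_smul, ← pow_succ]
        exact h1
      · rw [TensorProduct.tmul_smul, h2, smul_zero]
    exact bl_ker_inj hsurj hinj N c hxc h2

theorem bl_step [Module.Flat A A'] (u : A' ⊗[A] N) (n : N)
    (h : x • u = (1 : A') ⊗ₜ[A] n) : ∃ n₁ : N, (1 : A') ⊗ₜ[A] n₁ = u := by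
  obtain ⟨n₂, hn₂⟩ := bl_div hsurj hinj N n u h.symm
  have h1 : x • (u - (1 : A') ⊗ₜ[A] n₂) = 0 := by
    rw [smul_sub, h, hn₂, TensorProduct.tmul_smul, sub_self]
  obtain ⟨t, _, ht⟩ := bl_torsion_lift hsurj hinj N _ h1
  exact ⟨n₂ + t, by rw [TensorProduct.tmul_add, ht]; abel⟩

theorem bl_step_pow [Module.Flat A A'] (k : ℕ) (u : A' ⊗[A] N) (n : N)
    (h : x ^ k • u = (1 : A') ⊗ₜ[A] n) : ∃ n₁ : N, (1 : A') ⊗ₜ[A] n₁ = u := by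
  induction k generalizing u with
  | zero => exact ⟨n, by rw [← h, pow_zero, one_smul]⟩
  | succ k ih =>
    have h' : x ^ k • (x • u) = (1 : A') ⊗ₜ[A] n := by
      rw [smul_smul, ← pow_succ]
      exact h
    obtain ⟨n₁, hn₁⟩ := ih (x • u) h'
    exact bl_step hsurj hinj N u n₁ hn₁.symm

theorem bl_kdiv [Module.Flat A A'] (c : N) (h : (1 : A') ⊗ₜ[A] c = 0) :
    ∃ d : N, (1 : A') ⊗ₜ[A] d = 0 ∧ x • d = c := by
  obtain ⟨d₀, hd₀⟩ := bl_div hsurj hinj N c 0 (by rw [h, smul_zero])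
  have h1 : x • ((1 : A') ⊗ₜ[A] d₀) = 0 := by
    rw [← TensorProduct.tmul_smul, ← hd₀, h]
  obtain ⟨t, ht2, ht⟩ := bl_torsion_lift hsurj hinj N _ h1
  refine ⟨d₀ - t, ?_, ?_⟩
  · rw [TensorProduct.tmul_sub, ht, sub_self]
  · rw [smul_sub, ht2, sub_zero, ← hd₀]

theorem bl_kdiv_pow [Module.Flat A A'] (k : ℕ) (c : N) (h : (1 : A') ⊗ₜ[A] c = 0) :
    ∃ d : N, (1 : A') ⊗ₜ[A] d = 0 ∧ x ^ k • d = c := by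
  induction k generalizing c with
  | zero => exact ⟨c, h, by rw [pow_zero, one_smul]⟩
  | succ k ih =>
    obtain ⟨d₁, hd₁0, hd₁⟩ := ih c h
    obtain ⟨d, hd0, hd⟩ := bl_kdiv hsurj hinj N d₁ hd₁0
    exact ⟨d, hd0, by rw [pow_succ', mul_smul, smul_comm, hd, hd₁]⟩

end BLaux


set_option maxHeartbeats 1000000 in
/-- Let `A → A'` be a flat ring homomorphism and `x ∈ A` such that `A/xA → A'/xA'` is an
isomorphism.  Then for any `A`-modules `M`, `N`, the map
`Hom_A(M, N) → Hom_{A'}(A'⊗M, A'⊗N) ×_{Hom_{A'_x}(A'_x⊗M, A'_x⊗N)} Hom_{A_x}(M_x, N_x)`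
is bijective: base change lands in the fiber product, and every compatible pair of maps
comes from a unique `A`-linear map `M → N`. -/
theorem stmt18 (A : Type*) [CommRing A] (A' : Type*) [CommRing A'] [Algebra A A']
    [Module.Flat A A'] (x : A)
    (hiso : Function.Bijective
      (Ideal.quotientMap (Ideal.map (algebraMap A A') (Ideal.span {x})) (algebraMap A A')
        Ideal.le_comap_map))
    (M : Type*) [AddCommGroup M] [Module A M]
    (N : Type*) [AddCommGroup N] [Module A N] :
    (∀ (g : M →ₗ[A] N) (m : M),
      LinearMap.rTensor N
          (IsScalarTower.toAlgHom A A' (Localization.Away (algebraMap A A' x))).toLinearMap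
          (g.baseChange A' ((1 : A') ⊗ₜ[A] m)) =
        LinearMap.rTensor N (Localization.awayMapₐ (Algebra.ofId A A') x).toLinearMap
          (g.baseChange (Localization.Away x) ((1 : Localization.Away x) ⊗ₜ[A] m))) ∧
    ∀ (g' : A' ⊗[A] M →ₗ[A'] A' ⊗[A] N)
      (gx : Localization.Away x ⊗[A] M →ₗ[Localization.Away x] Localization.Away x ⊗[A] N),
      (∀ m : M,
        LinearMap.rTensor N
            (IsScalarTower.toAlgHom A A' (Localization.Away (algebraMap A A' x))).toLinearMap
            (g' ((1 : A') ⊗ₜ[A] m)) =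
          LinearMap.rTensor N (Localization.awayMapₐ (Algebra.ofId A A') x).toLinearMap
            (gx ((1 : Localization.Away x) ⊗ₜ[A] m))) →
      ∃! g : M →ₗ[A] N, g.baseChange A' = g' ∧ g.baseChange (Localization.Away x) = gx := by
  constructor
  · intro g m
    simp [LinearMap.rTensor_tmul]
    have := LinearMap.rTensor_tmul N (Localization.awayMapₐ (Algebra.ofId A A') x).toLinearMap
      (g m) (1 : Localization.Away x)
    rw [AlgHom.toLinearMap_apply, map_one] at this
    exact this.symm
  · intro g' gx hcomp
    -- extract the two concrete consequences of `hiso`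
    have hinj : ∀ a : A, algebraMap A A' x ∣ algebraMap A A' a → x ∣ a := by
      rintro a ⟨c, hc⟩
      have hmem : algebraMap A A' a ∈ Ideal.map (algebraMap A A') (Ideal.span {x}) := by
        rw [Ideal.map_span, Set.image_singleton, Ideal.mem_span_singleton]
        exact ⟨c, hc⟩
      have h0 : Ideal.quotientMap (Ideal.map (algebraMap A A') (Ideal.span {x}))
          (algebraMap A A') Ideal.le_comap_map (Ideal.Quotient.mk _ a) = 0 := by
        rw [Ideal.quotientMap_mk, Ideal.Quotient.eq_zero_iff_mem]
        exact hmem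
      have h1 := hiso.1 (a₁ := Ideal.Quotient.mk _ a) (a₂ := 0) (by rw [h0, map_zero])
      rw [← Ideal.mem_span_singleton]
      exact Ideal.Quotient.eq_zero_iff_mem.mp h1
    have hsurj : ∀ a' : A', ∃ a : A, algebraMap A A' x ∣ (a' - algebraMap A A' a) := by
      intro a'
      obtain ⟨q, hq⟩ := hiso.2 (Ideal.Quotient.mk _ a')
      obtain ⟨a, rfl⟩ := Ideal.Quotient.mk_surjective q
      refine ⟨a, ?_⟩
      rw [Ideal.quotientMap_mk] at hq
      have h1 : a' - algebraMap A A' a ∈ Ideal.map (algebraMap A A') (Ideal.span {x}) :=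
        (Submodule.Quotient.eq _).mp hq.symm
      rwa [Ideal.map_span, Set.image_singleton, Ideal.mem_span_singleton] at h1
    -- localization machinery
    haveI iN : IsLocalizedModule (Submonoid.powers x)
        (TensorProduct.mk A (Localization.Away x) N 1) :=
      (isLocalizedModule_iff_isBaseChange (Submonoid.powers x) (Localization.Away x) _).mpr
        (TensorProduct.isBaseChange A N (Localization.Away x))
    have hLocSurj : ∀ v : Localization.Away x ⊗[A] N,
        ∃ (k : ℕ) (n₀ : N), x ^ k • v = (1 : Localization.Away x) ⊗ₜ[A] n₀ := by
      intro v
      obtain ⟨⟨n₀, s⟩, hs⟩ := IsLocalizedModule.surj (Submonoid.powers x)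
        (TensorProduct.mk A (Localization.Away x) N 1) v
      obtain ⟨k, hk⟩ := s.2
      refine ⟨k, n₀, ?_⟩
      have hk' : x ^ k = (s : A) := hk
      rw [hk']
      simpa [Submonoid.smul_def] using hs
    have hLocKer : ∀ n : N, (1 : Localization.Away x) ⊗ₜ[A] n = 0 → ∃ k : ℕ, x ^ k • n = 0 := by
      intro n hn
      obtain ⟨s, hs⟩ := (IsLocalizedModule.eq_zero_iff (Submonoid.powers x)
        (f := TensorProduct.mk A (Localization.Away x) N 1)).mp (by simpa using hn)
      obtain ⟨k, hk⟩ := s.2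
      have hk' : x ^ k = (s : A) := hk
      exact ⟨k, by rw [hk']; simpa [Submonoid.smul_def] using hs⟩
    have hLocCancel : ∀ (k : ℕ) (v w : Localization.Away x ⊗[A] N),
        x ^ k • v = x ^ k • w → v = w := by
      intro k v w h
      have hu : IsUnit (algebraMap A (Localization.Away x) (x ^ k)) :=
        IsLocalization.map_units (M := Submonoid.powers x) (Localization.Away x) ⟨x ^ k, ⟨k, rfl⟩⟩
      rw [← algebraMap_smul (Localization.Away x) (x ^ k) v,
        ← algebraMap_smul (Localization.Away x) (x ^ k) w] at h
      exact hu.smul_left_cancel.mp h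
    -- the `A'` side, as a localized module over `A'`
    let e : ((Localization.Away (algebraMap A A' x)) ⊗[A'] (A' ⊗[A] N)) ≃ₗ[A']
        ((Localization.Away (algebraMap A A' x)) ⊗[A] N) :=
      (AlgebraTensorModule.cancelBaseChange A A' (Localization.Away (algebraMap A A' x))
        (Localization.Away (algebraMap A A' x)) N).restrictScalars A'
    let m1 : (A' ⊗[A] N) →ₗ[A'] ((Localization.Away (algebraMap A A' x)) ⊗[A'] (A' ⊗[A] N)) :=
      TensorProduct.mk A' (Localization.Away (algebraMap A A' x)) _ 1
    let ah : (A' ⊗[A] N) →ₗ[A'] ((Localization.Away (algebraMap A A' x)) ⊗[A] N) := e ∘ₗ m1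
    haveI im1 : IsLocalizedModule (Submonoid.powers (algebraMap A A' x)) m1 :=
      (isLocalizedModule_iff_isBaseChange (Submonoid.powers (algebraMap A A' x))
        (Localization.Away (algebraMap A A' x)) _).mpr
        (TensorProduct.isBaseChange A' (A' ⊗[A] N) (Localization.Away (algebraMap A A' x)))
    have hcoe : ∀ u : A' ⊗[A] N, ah u
        = LinearMap.rTensor N
            (IsScalarTower.toAlgHom A A' (Localization.Away (algebraMap A A' x))).toLinearMap u := by
      intro u
      induction u using TensorProduct.induction_on with
      | zero => simp
      | tmul a' n =>
        simp only [ah, m1, e, LinearMap.coe_comp, Function.comp_apply, TensorProduct.mk_apply,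
          LinearEquiv.coe_coe, LinearEquiv.restrictScalars_apply,
          AlgebraTensorModule.cancelBaseChange_tmul, LinearMap.rTensor_tmul,
          AlgHom.toLinearMap_apply, IsScalarTower.coe_toAlgHom']
        rw [← Algebra.algebraMap_eq_smul_one]
      | add u₁ u₂ h₁ h₂ => rw [map_add, map_add, h₁, h₂]
    haveI iα : IsLocalizedModule (Submonoid.powers (algebraMap A A' x)) ah :=
      IsLocalizedModule.of_linearEquiv (Submonoid.powers (algebraMap A A' x)) m1 e
    have hαker : ∀ u : A' ⊗[A] N,
        LinearMap.rTensor N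
          (IsScalarTower.toAlgHom A A' (Localization.Away (algebraMap A A' x))).toLinearMap u = 0 →
        ∃ l : ℕ, x ^ l • u = 0 := by
      intro u hu
      rw [← hcoe] at hu
      obtain ⟨s, hs⟩ := (IsLocalizedModule.eq_zero_iff (Submonoid.powers (algebraMap A A' x))
        (f := ah)).mp hu
      obtain ⟨l, hl⟩ := s.2
      have hl' : (algebraMap A A' x) ^ l = (s : A') := hl
      refine ⟨l, ?_⟩
      have h2 : ((algebraMap A A' x) ^ l) • u = 0 := by
        rw [hl']
        simpa [Submonoid.smul_def] using hs
      rwa [← map_pow, algebraMap_smul] at h2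
    have hα1 : ∀ n : N,
        LinearMap.rTensor N
          (IsScalarTower.toAlgHom A A' (Localization.Away (algebraMap A A' x))).toLinearMap
          ((1 : A') ⊗ₜ[A] n) = (1 : Localization.Away (algebraMap A A' x)) ⊗ₜ[A] n := by
      intro n
      rw [LinearMap.rTensor_tmul, AlgHom.toLinearMap_apply, map_one]
    have hβ1 : ∀ n : N,
        LinearMap.rTensor N (Localization.awayMapₐ (Algebra.ofId A A') x).toLinearMap
          ((1 : Localization.Away x) ⊗ₜ[A] n)
          = (1 : Localization.Away (algebraMap A A' x)) ⊗ₜ[A] n := by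
      intro n
      rw [LinearMap.rTensor_tmul, AlgHom.toLinearMap_apply, map_one]
      rfl
    -- the key exactness argument
    have key : ∀ (u : A' ⊗[A] N) (v : Localization.Away x ⊗[A] N),
        LinearMap.rTensor N
          (IsScalarTower.toAlgHom A A' (Localization.Away (algebraMap A A' x))).toLinearMap u =
        LinearMap.rTensor N (Localization.awayMapₐ (Algebra.ofId A A') x).toLinearMap v →
        ∃ n : N, (1 : A') ⊗ₜ[A] n = u ∧ (1 : Localization.Away x) ⊗ₜ[A] n = v := by
      intro u v h
      obtain ⟨k₀, n₀', hk₀⟩ := hLocSurj v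
      have h1 : LinearMap.rTensor N
          (IsScalarTower.toAlgHom A A' (Localization.Away (algebraMap A A' x))).toLinearMap
          (x ^ k₀ • u - (1 : A') ⊗ₜ[A] n₀') = 0 := by
        have h2 : x ^ k₀ • LinearMap.rTensor N
            (Localization.awayMapₐ (Algebra.ofId A A') x).toLinearMap v
            = (1 : Localization.Away (algebraMap A A' x)) ⊗ₜ[A] n₀' :=
          (map_smul _ _ _).symm.trans (by rw [hk₀, hβ1])
        rw [map_sub, map_smul, h]
        exact sub_eq_zero.mpr (h2.trans (hα1 n₀').symm)
      obtain ⟨l, hl⟩ := hαker _ h1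
      have hku : x ^ (l + k₀) • u = (1 : A') ⊗ₜ[A] (x ^ l • n₀') := by
        rw [smul_sub, sub_eq_zero, smul_smul, ← pow_add] at hl
        rw [hl, TensorProduct.tmul_smul]
      have hkv : x ^ (l + k₀) • v = (1 : Localization.Away x) ⊗ₜ[A] (x ^ l • n₀') := by
        rw [pow_add, mul_smul, hk₀, TensorProduct.tmul_smul]
      obtain ⟨n₁, hn₁⟩ := bl_step_pow hsurj hinj N (l + k₀) u (x ^ l • n₀') hku
      have hker : (1 : A') ⊗ₜ[A] (x ^ (l + k₀) • n₁ - x ^ l • n₀') = 0 := by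
        rw [TensorProduct.tmul_sub, TensorProduct.tmul_smul, hn₁, hku, sub_self]
      obtain ⟨d, hd0, hdk⟩ := bl_kdiv_pow hsurj hinj N (l + k₀) _ hker
      refine ⟨n₁ - d, ?_, ?_⟩
      · rw [TensorProduct.tmul_sub, hd0, sub_zero, hn₁]
      · apply hLocCancel (l + k₀)
        rw [hkv, ← TensorProduct.tmul_smul, smul_sub, hdk]
        congr 1
        abel
    -- uniqueness of preimages
    have uniq : ∀ n n' : N, (1 : A') ⊗ₜ[A] n = (1 : A') ⊗ₜ[A] n' →
        (1 : Localization.Away x) ⊗ₜ[A] n = (1 : Localization.Away x) ⊗ₜ[A] n' → n = n' := by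
      intro n n' h1 h2
      have e1 : (1 : A') ⊗ₜ[A] (n - n') = 0 := by rw [TensorProduct.tmul_sub, h1, sub_self]
      have e2 : (1 : Localization.Away x) ⊗ₜ[A] (n - n') = 0 := by
        rw [TensorProduct.tmul_sub, h2, sub_self]
      obtain ⟨k, hk⟩ := hLocKer _ e2
      exact sub_eq_zero.mp (bl_ker_inj_pow hsurj hinj N k _ hk e1)
    have hP : ∀ m : M, ∃ n : N, (1 : A') ⊗ₜ[A] n = g' ((1 : A') ⊗ₜ[A] m) ∧
        (1 : Localization.Away x) ⊗ₜ[A] n = gx ((1 : Localization.Away x) ⊗ₜ[A] m) :=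
      fun m => key _ _ (hcomp m)
    choose g₀ hg1 hg2 using hP
    have hsmul' : ∀ (a : A) (w : A' ⊗[A] M), g' (a • w) = a • g' w := by
      intro a w
      rw [← algebraMap_smul A' a w, map_smul, algebraMap_smul]
    have hsmulx : ∀ (a : A) (w : Localization.Away x ⊗[A] M), gx (a • w) = a • gx w := by
      intro a w
      rw [← algebraMap_smul (Localization.Away x) a w, map_smul, algebraMap_smul]
    let g : M →ₗ[A] N :=
      { toFun := g₀
        map_add' := by
          intro m m'
          apply uniq
          · rw [TensorProduct.tmul_add, hg1 m, hg1 m', ← map_add, ← TensorProduct.tmul_add]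
            exact hg1 (m + m')
          · rw [TensorProduct.tmul_add, hg2 m, hg2 m', ← map_add, ← TensorProduct.tmul_add]
            exact hg2 (m + m')
        map_smul' := by
          intro a m
          apply uniq
          · show (1 : A') ⊗ₜ[A] g₀ (a • m) = (1 : A') ⊗ₜ[A] (a • g₀ m)
            calc (1 : A') ⊗ₜ[A] g₀ (a • m) = g' ((1 : A') ⊗ₜ[A] (a • m)) := hg1 _
              _ = g' (a • ((1 : A') ⊗ₜ[A] m)) := by rw [TensorProduct.tmul_smul]
              _ = a • g' ((1 : A') ⊗ₜ[A] m) := hsmul' a _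
              _ = a • ((1 : A') ⊗ₜ[A] g₀ m) := by rw [hg1]
              _ = (1 : A') ⊗ₜ[A] (a • g₀ m) := by rw [TensorProduct.tmul_smul]
          · show (1 : Localization.Away x) ⊗ₜ[A] g₀ (a • m)
                = (1 : Localization.Away x) ⊗ₜ[A] (a • g₀ m)
            calc (1 : Localization.Away x) ⊗ₜ[A] g₀ (a • m)
                = gx ((1 : Localization.Away x) ⊗ₜ[A] (a • m)) := hg2 _
              _ = gx (a • ((1 : Localization.Away x) ⊗ₜ[A] m)) := by
                  rw [TensorProduct.tmul_smul]
              _ = a • gx ((1 : Localization.Away x) ⊗ₜ[A] m) := hsmulx a _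
              _ = a • ((1 : Localization.Away x) ⊗ₜ[A] g₀ m) := by rw [hg2]
              _ = (1 : Localization.Away x) ⊗ₜ[A] (a • g₀ m) := by
                  rw [TensorProduct.tmul_smul] }
    refine ⟨g, ⟨?_, ?_⟩, ?_⟩
    · apply LinearMap.ext
      intro w
      induction w using TensorProduct.induction_on with
      | zero => rw [map_zero, map_zero]
      | tmul a' m =>
        have hw : a' ⊗ₜ[A] m = a' • ((1 : A') ⊗ₜ[A] m) := by
          rw [TensorProduct.smul_tmul', smul_eq_mul, mul_one]
        rw [hw, map_smul, map_smul, LinearMap.baseChange_tmul, ← hg1]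
        rfl
      | add w₁ w₂ h₁ h₂ => rw [map_add, map_add, h₁, h₂]
    · apply LinearMap.ext
      intro w
      induction w using TensorProduct.induction_on with
      | zero => rw [map_zero, map_zero]
      | tmul c m =>
        have hw : c ⊗ₜ[A] m = c • ((1 : Localization.Away x) ⊗ₜ[A] m) := by
          rw [TensorProduct.smul_tmul', smul_eq_mul, mul_one]
        rw [hw, map_smul, map_smul, LinearMap.baseChange_tmul, ← hg2]
        rfl
      | add w₁ w₂ h₁ h₂ => rw [map_add, map_add, h₁, h₂]
    · rintro g₁ ⟨hb1, hb2⟩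
      apply LinearMap.ext
      intro m
      apply uniq
      · show (1 : A') ⊗ₜ[A] g₁ m = (1 : A') ⊗ₜ[A] g₀ m
        rw [hg1, ← hb1, LinearMap.baseChange_tmul]
      · show (1 : Localization.Away x) ⊗ₜ[A] g₁ m = (1 : Localization.Away x) ⊗ₜ[A] g₀ m
        rw [hg2, ← hb2, LinearMap.baseChange_tmul]
end

section
/- Let A → A' be a flat ring map and x ∈ A with A/xA ≅ A'/xA'. Then the map Spec A' ⊔ Spec A_x → Spec A is surjective, and a subset W of Spec A is open if and only if its preimages in Spec A' and Spec A_x are open; i.e., Spec A carries the quotient (pushout) topology from Spec A' ⊔_{Spec A'_x} Spec A_x. -/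
/-!
A prime containing `x` lies in `V(x) ≅ Spec (A/xA) ≅ Spec (A'/xA')`, so it comes from `Spec A'`;
a prime avoiding `x` lies in `D(x) = Spec A_x`. Both `A'` and `A_x` are flat over `A`, so by going
down `Spec A' ⊔ Spec A_x = Spec (A' × A_x) → Spec A` is a surjective generalizing map of spectra.
Such a map is a quotient map: the image of a closed set is stable under specialization, and for
images of closed sets under `Spec` of a ring map this forces closedness.
-/

open PrimeSpectrum Topology

lemma GeneralizingMap.sumElim {X Y Z : Type*} [TopologicalSpace X] [TopologicalSpace Y]
    [TopologicalSpace Z] {f : X → Z} {g : Y → Z} (hf : GeneralizingMap f)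
    (hg : GeneralizingMap g) : GeneralizingMap (Sum.elim f g) := by
  rintro (a | b) z hz
  · obtain ⟨a', ha', rfl⟩ := hf hz
    exact ⟨.inl a', ha'.map continuous_inl, rfl⟩
  · obtain ⟨b', hb', rfl⟩ := hg hz
    exact ⟨.inr b', hb'.map continuous_inr, rfl⟩

section

variable {R S T : Type*} [CommRing R] [CommRing S] [CommRing T]

lemma PrimeSpectrum.sumElim_comap_eq_comap_prod (f : R →+* S) (g : R →+* T) :
    Sum.elim (comap f) (comap g) = comap (f.prod g) ∘ primeSpectrumProdHomeo.symm := by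
  ext (q | q) : 1
  · show comap f q = comap (f.prod g) ((primeSpectrumProd S T).symm (.inl q))
    rw [primeSpectrumProd_symm_inl, ← comap_comp_apply]
    rfl
  · show comap g q = comap (f.prod g) ((primeSpectrumProd S T).symm (.inr q))
    rw [primeSpectrumProd_symm_inr, ← comap_comp_apply]
    rfl

lemma PrimeSpectrum.isQuotientMap_sumElim_comap {f : R →+* S} {g : R →+* T}
    (hsurj : Function.Surjective (Sum.elim (comap f) (comap g)))
    (hf : GeneralizingMap (comap f)) (hg : GeneralizingMap (comap g)) :
    IsQuotientMap (Sum.elim (comap f) (comap g)) := by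
  have hprod : comap (f.prod g) = Sum.elim (comap f) (comap g) ∘ primeSpectrumProdHomeo := by
    rw [sumElim_comap_eq_comap_prod, Function.comp_assoc, Homeomorph.symm_comp_self,
      Function.comp_id]
  have hq : IsQuotientMap (comap (f.prod g)) := by
    refine isQuotientMap_of_generalizingMap ?_ ?_ <;> rw [hprod]
    · exact hsurj.comp primeSpectrumProdHomeo.surjective
    · exact primeSpectrumProdHomeo.isOpenEmbedding.generalizingMap.comp (hf.sumElim hg)
  rw [sumElim_comap_eq_comap_prod]
  exact hq.comp primeSpectrumProdHomeo.symm.isQuotientMap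

end

lemma PrimeSpectrum.zeroLocus_subset_range_comap {A B : Type*} [CommRing A] [CommRing B]
    (f : A →+* B) {I : Ideal A}
    (h : Function.Bijective (Ideal.quotientMap (I.map f) f Ideal.le_comap_map)) :
    zeroLocus I ⊆ Set.range (comap f) := by
  let e := RingEquiv.ofBijective _ h
  have hmk : (e.symm : B ⧸ I.map f →+* A ⧸ I).comp ((Ideal.Quotient.mk _).comp f) =
      Ideal.Quotient.mk I := by
    ext a
    exact e.symm_apply_apply (Ideal.Quotient.mk I a)
  rw [← Ideal.mk_ker (I := I), ← range_comap_of_surjective _ _ Ideal.Quotient.mk_surjective,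
    ← hmk]
  rintro _ ⟨p, rfl⟩
  exact ⟨comap (Ideal.Quotient.mk _) (comap e.symm p), by rw [comap_comp_apply, comap_comp_apply]⟩

/-- Let `A → A'` be a flat ring map and `x ∈ A` with `A/xA ≅ A'/xA'`.  Then
`Spec A' ⊔ Spec A_x → Spec A` is surjective, and a subset `W ⊆ Spec A` is open iff its
preimages in `Spec A'` and `Spec A_x` are open; i.e. `Spec A` carries the pushout
topology from `Spec A' ⊔_{Spec A'_x} Spec A_x`. -/
theorem stmt19 (A : Type*) [CommRing A] (A' : Type*) [CommRing A'] [Algebra A A']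
    [Module.Flat A A'] (x : A)
    (hiso : Function.Bijective
      (Ideal.quotientMap (Ideal.map (algebraMap A A') (Ideal.span {x})) (algebraMap A A')
        Ideal.le_comap_map)) :
    (∀ p : PrimeSpectrum A,
      (∃ q : PrimeSpectrum A', PrimeSpectrum.comap (algebraMap A A') q = p) ∨
      (∃ u : PrimeSpectrum (Localization.Away x),
        PrimeSpectrum.comap (algebraMap A (Localization.Away x)) u = p)) ∧
    ∀ W : Set (PrimeSpectrum A),
      IsOpen W ↔
        IsOpen (PrimeSpectrum.comap (algebraMap A A') ⁻¹' W) ∧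
        IsOpen (PrimeSpectrum.comap (algebraMap A (Localization.Away x)) ⁻¹' W) := by
  set f := algebraMap A A'
  set g := algebraMap A (Localization.Away x)
  have hsurj : Function.Surjective (Sum.elim (comap f) (comap g)) := by
    intro p
    by_cases hx : x ∈ p.asIdeal
    · obtain ⟨q, hq⟩ := zeroLocus_subset_range_comap f hiso
        ((mem_zeroLocus _ _).mpr (Ideal.span_singleton_le_iff_mem _ |>.mpr hx))
      exact ⟨.inl q, hq⟩
    · obtain ⟨u, hu⟩ : p ∈ Set.range (comap g) := by
        rwa [localization_away_comap_range _ x, SetLike.mem_coe, mem_basicOpen]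
      exact ⟨.inr u, hu⟩
  have hq := isQuotientMap_sumElim_comap hsurj
    (Algebra.HasGoingDown.iff_generalizingMap_primeSpectrumComap.mp inferInstance)
    (Algebra.HasGoingDown.iff_generalizingMap_primeSpectrumComap.mp inferInstance)
  refine ⟨fun p => ?_, fun W => ?_⟩
  · obtain ⟨q | u, rfl⟩ := hsurj p
    exacts [.inl ⟨q, rfl⟩, .inr ⟨u, rfl⟩]
  · rw [← hq.isOpen_preimage, isOpen_sum_iff]
    rfl
end
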